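/- Fix A > 0, d ≥ 1, a coordinate ν ∈ {1, …, d}, and a point z ∈ ℝ^d. Let L : ℝ^d → ℝ be differentiable with bounded and continuous gradient. Let U be a random vector in ℝ^d with independent components, each uniformly distributed on [−A, A], and let V^ν be a random vector in ℝ^d with independent components such that every component other than the ν-th is uniformly distributed on [−A, A] and the ν-th component has probability density f_A(x) := C(A)^{-1} (e^A − e^x)(e^A − e^{−x}) on [−A, A], where C(A) := ∫_{−A}^{A} (e^A − e^x)(e^A − e^{−x}) dx. Then E[ L(z + U) (e^{−U_ν} − e^{U_ν}) ] = − e^{−A} (C(A)/(2A)) E[ ∂_ν L(z + V^ν) ]. -/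

import Mathlib

open Real MeasureTheory ProbabilityTheory

/-- The normalizing constant `C(A) = ∫_{-A}^{A} (e^A - e^x)(e^A - e^{-x}) dx`. -/
noncomputable def Cconst (A : ℝ) : ℝ :=
  ∫ x in (-A)..A, (exp A - exp x) * (exp A - exp (-x))

/-- The uniform distribution on `[-A, A]`. -/
noncomputable def unifLaw (A : ℝ) : Measure ℝ :=
  (ENNReal.ofReal (2 * A))⁻¹ • volume.restrict (Set.Icc (-A) A)

/-- The distribution on `[-A, A]` with density `f_A(x) = C(A)⁻¹ (e^A - e^x)(e^A - e^{-x})`. -/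
noncomputable def densLaw (A : ℝ) : Measure ℝ :=
  (volume.restrict (Set.Icc (-A) A)).withDensity
    fun x => ENNReal.ofReal ((Cconst A)⁻¹ * ((exp A - exp x) * (exp A - exp (-x))))

/-!
Integrating out every coordinate but `ν` (Fubini for the product laws) reduces the identity to
one dimension, where it is an integration by parts: `e^{-A} (e^A - e^t) (e^A - e^{-t})
= e^A + e^{-A} - e^t - e^{-t}` is a primitive of `e^{-t} - e^t` vanishing at `t = ±A`, so for the
slice `g` of `L` along coordinate `ν`,
`∫_{-A}^{A} g (e^{-t} - e^t) dt = -e^{-A} ∫_{-A}^{A} g' (e^A - e^t) (e^A - e^{-t}) dt`,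
and the last weight is `C(A)` times the density `f_A`.
-/

theorem integral_pi_eq_integral_insertNth {n : ℕ} {α : Fin (n + 1) → Type*}
    [∀ i, MeasurableSpace (α i)] {E : Type*} [NormedAddCommGroup E] [NormedSpace ℝ E]
    (μ : ∀ i, Measure (α i)) [∀ i, SigmaFinite (μ i)] (i : Fin (n + 1))
    {H : (∀ j, α j) → E} (hH : Integrable H (Measure.pi μ)) :
    ∫ x, H x ∂Measure.pi μ =
      ∫ y, ∫ t, H (i.insertNth t y) ∂μ i ∂Measure.pi fun j => μ (i.succAbove j) := by
  have he := (measurePreserving_piFinSuccAbove μ i).symm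
  rw [← he.integral_comp', integral_prod_symm]
  · rfl
  · exact he.integrable_comp_emb (MeasurableEquiv.measurableEmbedding _) |>.2 hH

theorem Continuous.integrable_pi_of_ae_mem {ι E : Type*} [Fintype ι] [NormedAddCommGroup E]
    {μ : ι → Measure ℝ} [∀ i, IsFiniteMeasure (μ i)] {K : ι → Set ℝ}
    (hK : ∀ i, IsCompact (K i)) (hμ : ∀ i, ∀ᵐ t ∂μ i, t ∈ K i)
    {H : (ι → ℝ) → E} (hH : Continuous H) : Integrable H (Measure.pi μ) := by
  have hsupp : ∀ᵐ x ∂Measure.pi μ, x ∈ Set.univ.pi K := by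
    simpa only [Set.mem_univ_pi] using
      Filter.eventually_all.2 fun i => Measure.tendsto_eval_ae_ae.eventually (hμ i)
  rw [← Measure.restrict_eq_self_of_ae_mem hsupp]
  exact hH.continuousOn.integrableOn_compact (isCompact_univ_pi hK)

theorem integral_eq_integral_pi_of_map_eq {Ω ι E : Type*} [MeasurableSpace Ω] [Fintype ι]
    [NormedAddCommGroup E] [NormedSpace ℝ E] {P : Measure Ω} {X : Ω → EuclideanSpace ℝ ι}
    {μ : Measure (ι → ℝ)} [NeZero μ] (hX : P.map (fun ω i => X ω i) = μ)
    {G : EuclideanSpace ℝ ι → E} (hG : Continuous G) :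
    ∫ ω, G (X ω) ∂P = ∫ x, G (WithLp.toLp 2 x) ∂μ := by
  subst hX
  exact (integral_map (.of_map_ne_zero (NeZero.ne _))
    (hG.comp (PiLp.continuous_toLp 2 _)).aestronglyMeasurable).symm

theorem DifferentiableAt.hasDerivAt_add_smul_single {ι : Type*} [Fintype ι] [DecidableEq ι]
    {L : EuclideanSpace ℝ ι → ℝ} {x : EuclideanSpace ℝ ι} {i : ι} {t : ℝ}
    (hL : DifferentiableAt ℝ L (x + t • EuclideanSpace.single i 1)) :
    HasDerivAt (fun s : ℝ => L (x + s • EuclideanSpace.single i 1))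
      (gradient L (x + t • EuclideanSpace.single i 1) i) t := by
  have hline : HasDerivAt (fun s : ℝ => x + s • EuclideanSpace.single i (1 : ℝ))
      (EuclideanSpace.single i 1) t := by
    simpa using ((hasDerivAt_id t).smul_const (EuclideanSpace.single i (1 : ℝ))).const_add x
  refine (hL.hasFDerivAt.comp_hasDerivAt t hline).congr_deriv ?_
  rw [← inner_gradient_left, EuclideanSpace.inner_single_right]
  simp

theorem toLp_insertNth_eq_add_smul_single {n : ℕ} (i : Fin (n + 1)) (t : ℝ) (y : Fin n → ℝ) :
    WithLp.toLp 2 (i.insertNth t y) =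
      WithLp.toLp 2 (i.insertNth 0 y) + t • EuclideanSpace.single i (1 : ℝ) := by
  ext j
  rcases eq_or_ne j i with rfl | hj
  · simp
  · obtain ⟨k, rfl⟩ := Fin.exists_succAbove_eq hj
    simp [hj]

theorem Differentiable.hasDerivAt_comp_insertNth {n : ℕ}
    {L : EuclideanSpace ℝ (Fin (n + 1)) → ℝ} (hL : Differentiable ℝ L)
    (z : EuclideanSpace ℝ (Fin (n + 1))) (i : Fin (n + 1)) (y : Fin n → ℝ) (t : ℝ) :
    HasDerivAt (fun s => L (z + WithLp.toLp 2 (i.insertNth s y)))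
      (gradient L (z + WithLp.toLp 2 (i.insertNth t y)) i) t := by
  have h := (hL _).hasDerivAt_add_smul_single
    (x := z + WithLp.toLp 2 (i.insertNth 0 y)) (i := i) (t := t)
  simpa only [add_assoc, ← toLp_insertNth_eq_add_smul_single] using h

theorem hasDerivAt_exp_neg_mul_exp_sub_mul_exp_sub (A t : ℝ) :
    HasDerivAt (fun s => exp (-A) * ((exp A - exp s) * (exp A - exp (-s))))
      (exp (-t) - exp t) t := by
  have hneg : HasDerivAt (fun s => exp (-s)) (-exp (-t)) t := by
    simpa using (hasDerivAt_neg t).exp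
  refine ((((hasDerivAt_exp t).const_sub _).mul (hneg.const_sub _)).const_mul _).congr_deriv ?_
  rw [exp_neg t, exp_neg A]
  field_simp
  ring

theorem integral_mul_exp_neg_sub_exp {A : ℝ} {g g' : ℝ → ℝ}
    (hg : ∀ t ∈ Set.uIcc (-A) A, HasDerivAt g (g' t) t)
    (hg' : IntervalIntegrable g' volume (-A) A) :
    ∫ t in (-A)..A, g t * (exp (-t) - exp t) =
      -exp (-A) * ∫ t in (-A)..A, g' t * ((exp A - exp t) * (exp A - exp (-t))) := by
  rw [intervalIntegral.integral_mul_deriv_eq_deriv_mul hg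
    (fun t _ => hasDerivAt_exp_neg_mul_exp_sub_mul_exp_sub A t) hg'
    ((by fun_prop : Continuous fun t : ℝ => exp (-t) - exp t).intervalIntegrable _ _)]
  simp only [sub_self, zero_mul, mul_zero, neg_neg, zero_sub]
  rw [← intervalIntegral.integral_const_mul, ← intervalIntegral.integral_neg]
  congr 1 with t
  ring

section Laws

variable {A : ℝ}

theorem Cconst_pos (hA : 0 < A) : 0 < Cconst A := by
  refine intervalIntegral.intervalIntegral_pos_of_pos_on
    ((by fun_prop : Continuous fun x : ℝ => (exp A - exp x) * (exp A - exp (-x))).intervalIntegrable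
      _ _) (fun x hx => ?_) (by linarith)
  exact mul_pos (sub_pos.2 (exp_lt_exp.2 hx.2)) (sub_pos.2 (exp_lt_exp.2 (by linarith [hx.1])))

theorem density_densLaw_nonneg (hA : 0 < A) {x : ℝ} (hx : x ∈ Set.Icc (-A) A) :
    0 ≤ (Cconst A)⁻¹ * ((exp A - exp x) * (exp A - exp (-x))) :=
  mul_nonneg (inv_nonneg.2 (Cconst_pos hA).le) <|
    mul_nonneg (sub_nonneg.2 (exp_le_exp.2 hx.2)) (sub_nonneg.2 (exp_le_exp.2 (by linarith [hx.1])))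

theorem integral_unifLaw (hA : 0 < A) (g : ℝ → ℝ) :
    ∫ t, g t ∂unifLaw A = (2 * A)⁻¹ * ∫ t in (-A)..A, g t := by
  rw [unifLaw, integral_smul_measure, ENNReal.toReal_inv, ENNReal.toReal_ofReal (by linarith),
    integral_Icc_eq_integral_Ioc, ← intervalIntegral.integral_of_le (by linarith), smul_eq_mul]

theorem integral_densLaw (hA : 0 < A) (g : ℝ → ℝ) :
    ∫ t, g t ∂densLaw A =
      (Cconst A)⁻¹ * ∫ t in (-A)..A, g t * ((exp A - exp t) * (exp A - exp (-t))) := by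
  rw [densLaw, integral_withDensity_eq_integral_toReal_smul (by fun_prop)
    (Filter.Eventually.of_forall fun _ => ENNReal.ofReal_lt_top),
    intervalIntegral.integral_of_le (by linarith), ← integral_Icc_eq_integral_Ioc,
    ← integral_const_mul]
  refine setIntegral_congr_fun measurableSet_Icc fun t ht => ?_
  rw [ENNReal.toReal_ofReal (density_densLaw_nonneg hA ht), smul_eq_mul]
  ring

theorem isProbabilityMeasure_unifLaw (hA : 0 < A) : IsProbabilityMeasure (unifLaw A) := by
  constructor
  rw [unifLaw, Measure.smul_apply, Measure.restrict_apply_univ, Real.volume_Icc, smul_eq_mul,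
    show A - -A = 2 * A by ring]
  exact ENNReal.inv_mul_cancel (by positivity) ENNReal.ofReal_ne_top

theorem isProbabilityMeasure_densLaw (hA : 0 < A) : IsProbabilityMeasure (densLaw A) := by
  constructor
  have hint : IntegrableOn (fun x => (Cconst A)⁻¹ * ((exp A - exp x) * (exp A - exp (-x))))
      (Set.Icc (-A) A) :=
    (by fun_prop : Continuous fun x : ℝ => (Cconst A)⁻¹ * ((exp A - exp x) * (exp A - exp (-x))))
      |>.integrableOn_Icc
  have hnonneg : ∀ᵐ x ∂volume.restrict (Set.Icc (-A) A),
      0 ≤ (Cconst A)⁻¹ * ((exp A - exp x) * (exp A - exp (-x))) :=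
    (ae_restrict_mem measurableSet_Icc).mono fun _ => density_densLaw_nonneg hA
  rw [densLaw, withDensity_apply _ MeasurableSet.univ, Measure.restrict_univ,
    ← ofReal_integral_eq_lintegral_ofReal hint hnonneg, integral_const_mul,
    integral_Icc_eq_integral_Ioc, ← intervalIntegral.integral_of_le (by linarith), ← Cconst,
    inv_mul_cancel₀ (Cconst_pos hA).ne', ENNReal.ofReal_one]

theorem ae_mem_Icc_unifLaw : ∀ᵐ t ∂unifLaw A, t ∈ Set.Icc (-A) A :=
  Measure.ae_smul_measure (ae_restrict_mem measurableSet_Icc) _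

theorem ae_mem_Icc_densLaw : ∀ᵐ t ∂densLaw A, t ∈ Set.Icc (-A) A :=
  (withDensity_absolutelyContinuous _ _).ae_le (ae_restrict_mem measurableSet_Icc)

theorem integral_unifLaw_mul_exp_neg_sub_exp (hA : 0 < A) {g g' : ℝ → ℝ}
    (hg : ∀ t ∈ Set.uIcc (-A) A, HasDerivAt g (g' t) t)
    (hg' : IntervalIntegrable g' volume (-A) A) :
    ∫ t, g t * (exp (-t) - exp t) ∂unifLaw A =
      -exp (-A) * (Cconst A / (2 * A)) * ∫ t, g' t ∂densLaw A := by
  rw [integral_unifLaw hA, integral_densLaw hA, integral_mul_exp_neg_sub_exp hg hg']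
  field_simp [(Cconst_pos hA).ne']

end Laws

theorem stmt_7_general (d : ℕ) (ν : Fin d) (A : ℝ) (hA : 0 < A)
    (z : EuclideanSpace ℝ (Fin d))
    (L : EuclideanSpace ℝ (Fin d) → ℝ) (hL : Differentiable ℝ L)
    (hLcont : Continuous (gradient L))
    (Ω : Type*) [MeasureSpace Ω] [IsProbabilityMeasure (ℙ : Measure Ω)]
    (U V : Ω → EuclideanSpace ℝ (Fin d))
    (hUlaw : Measure.map (fun ω i => U ω i) ℙ = Measure.pi fun _ : Fin d => unifLaw A)
    (hVlaw : Measure.map (fun ω i => V ω i) ℙ =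
      Measure.pi fun i : Fin d => if i = ν then densLaw A else unifLaw A) :
    ∫ ω, L (z + U ω) * (exp (-(U ω ν)) - exp (U ω ν)) =
      -exp (-A) * (Cconst A / (2 * A)) * ∫ ω, gradient L (z + V ω) ν := by
  obtain ⟨n, rfl⟩ : ∃ n, d = n + 1 := Nat.exists_eq_add_one_of_ne_zero ν.pos.ne'
  have := isProbabilityMeasure_unifLaw hA
  have := isProbabilityMeasure_densLaw hA
  have (i : Fin (n + 1)) : IsProbabilityMeasure (if i = ν then densLaw A else unifLaw A) := by
    split <;> infer_instance
  have hLc := hL.continuous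
  have hF : Continuous fun x : EuclideanSpace ℝ (Fin (n + 1)) =>
      L (z + x) * (exp (-(x ν)) - exp (x ν)) := by fun_prop
  have hF' : Continuous fun x : EuclideanSpace ℝ (Fin (n + 1)) => gradient L (z + x) ν := by
    fun_prop
  rw [integral_eq_integral_pi_of_map_eq hUlaw hF, integral_eq_integral_pi_of_map_eq hVlaw hF',
    integral_pi_eq_integral_insertNth _ ν, integral_pi_eq_integral_insertNth _ ν]
  · simp only [Fin.succAbove_ne, ↓reduceIte]
    rw [← integral_const_mul]
    congr 1 with y
    simp only [Fin.insertNth_apply_same]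
    exact integral_unifLaw_mul_exp_neg_sub_exp hA (fun t _ => hL.hasDerivAt_comp_insertNth z ν y t)
      (Continuous.intervalIntegrable (by fun_prop) _ _)
  · exact (hF'.comp (PiLp.continuous_toLp 2 _)).integrable_pi_of_ae_mem (fun _ => isCompact_Icc)
      fun i => by split; exacts [ae_mem_Icc_densLaw, ae_mem_Icc_unifLaw]
  · exact (hF.comp (PiLp.continuous_toLp 2 _)).integrable_pi_of_ae_mem (fun _ => isCompact_Icc)
      fun _ => ae_mem_Icc_unifLaw

/-- If `L : ℝ^d → ℝ` has a bounded continuous gradient, `U` has i.i.d. components uniform on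
`[-A, A]`, and `V^ν` has independent components, all uniform on `[-A, A]` except the `ν`-th,
which has density `f_A`, then
`E[L(z + U)(e^{-U_ν} - e^{U_ν})] = -e^{-A} (C(A)/(2A)) E[∂_ν L(z + V^ν)]`. -/
theorem stmt_7 (d : ℕ) (hd : 1 ≤ d) (ν : Fin d) (A : ℝ) (hA : 0 < A)
    (z : EuclideanSpace ℝ (Fin d))
    (L : EuclideanSpace ℝ (Fin d) → ℝ) (hL : Differentiable ℝ L)
    (M : ℝ) (hLbdd : ∀ x, ‖gradient L x‖ ≤ M) (hLcont : Continuous (gradient L))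
    (Ω : Type*) [MeasureSpace Ω] [IsProbabilityMeasure (ℙ : Measure Ω)]
    (U V : Ω → EuclideanSpace ℝ (Fin d)) (hU : Measurable U) (hV : Measurable V)
    (hUlaw : Measure.map (fun ω i => U ω i) ℙ = Measure.pi fun _ : Fin d => unifLaw A)
    (hVlaw : Measure.map (fun ω i => V ω i) ℙ =
      Measure.pi fun i : Fin d => if i = ν then densLaw A else unifLaw A) :
    ∫ ω, L (z + U ω) * (exp (-(U ω ν)) - exp (U ω ν)) =
      -exp (-A) * (Cconst A / (2 * A)) * ∫ ω, gradient L (z + V ω) ν :=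
  stmt_7_general d ν A hA z L hL hLcont Ω U V hUlaw hVlaw
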